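/- arXiv:2007.13082 — 2 statements merged into one kernel-verified Lean document; each statement's English description precedes it below -/
import Mathlib

section
/- Let H_0 be a connected simple graph with exactly one vertex v of degree r > 3, all other vertices of degree at most 3, and every degree-2 vertex contained in a triangle. Define the level of a vertex as its distance to v. If the pure 2-skeleton of Δ(L(H_0)) is strongly connected, then every vertex x of H_0 with level ≥ 2 and degree 3 has level exactly 2 and is adjacent to both endpoints of an edge joining two level-1 vertices. -/
open Finset SimpleGraph

variable {V : Type*} [DecidableEq V]

/-- An abstract simplicial complex: contains the empty face and is downward closed. -/
def IsComplex (K : Set (Finset V)) : Prop :=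
  (∅ : Finset V) ∈ K ∧ ∀ F ∈ K, ∀ G ⊆ F, G ∈ K

/-- `F` is a facet (maximal face) of `K`. -/
def IsFacet (K : Set (Finset V)) (F : Finset V) : Prop :=
  F ∈ K ∧ ∀ G ∈ K, F ⊆ G → F = G

/-- `K` is pure: all facets have the same cardinality. -/
def IsPure (K : Set (Finset V)) : Prop :=
  ∀ F G, IsFacet K F → IsFacet K G → F.card = G.card

/-- Deletion `K - v`. -/
def del (K : Set (Finset V)) (v : V) : Set (Finset V) := {F ∈ K | v ∉ F}

/-- The link of a vertex. -/
def link (K : Set (Finset V)) (v : V) : Set (Finset V) :=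
  {F | v ∉ F ∧ insert v F ∈ K}

/-- A shedding vertex: a vertex such that no face of the link is a facet of the deletion. -/
def IsSheddingVertex (K : Set (Finset V)) (v : V) : Prop :=
  ({v} : Finset V) ∈ K ∧ ∀ F ∈ link K v, ¬ IsFacet (del K v) F

/-- `K` is a (possibly empty-face-only) simplex: the power set of some finset. -/
def IsSimplexComplex (K : Set (Finset V)) : Prop :=
  ∃ F : Finset V, K = {G | G ⊆ F}

/-- Vertex decomposability. -/
inductive VertexDecomposable : Set (Finset V) → Prop
  | simplex (K : Set (Finset V)) : IsSimplexComplex K → VertexDecomposable K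
  | shed (K : Set (Finset V)) (v : V) : IsSheddingVertex K v →
      VertexDecomposable (link K v) → VertexDecomposable (del K v) →
      VertexDecomposable K

/-- The complex generated by a family of finsets. -/
def gen (S : Set (Finset V)) : Set (Finset V) := {G | ∃ F ∈ S, G ⊆ F}

/-- A shelling order of the facets of `K`. -/
def IsShelling (K : Set (Finset V)) (l : List (Finset V)) : Prop :=
  l.Nodup ∧ (∀ F, IsFacet K F ↔ F ∈ l) ∧
  ∀ i : ℕ, (h : i + 1 < l.length) →
    (∃ F, IsFacet (gen {F | F ∈ l.take (i+1)} ∩ gen {l.get ⟨i+1, h⟩}) F) ∧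
    ∀ F, IsFacet (gen {F | F ∈ l.take (i+1)} ∩ gen {l.get ⟨i+1, h⟩}) F →
      F.card + 1 = (l.get ⟨i+1, h⟩).card

def Shellable (K : Set (Finset V)) : Prop := ∃ l, IsShelling K l

/-- Two facets are adjacent (intersect in codimension one). -/
def FacetAdj (K : Set (Finset V)) (F G : Finset V) : Prop :=
  IsFacet K F ∧ IsFacet K G ∧ (F ∩ G).card + 1 = F.card ∧ (F ∩ G).card + 1 = G.card

/-- A pure complex is strongly connected (connected in codimension 1). -/
def StronglyConnected (K : Set (Finset V)) : Prop :=
  IsPure K ∧ ∀ F G, IsFacet K F → IsFacet K G → Relation.ReflTransGen (FacetAdj K) F G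

/-- The clique complex of a graph. -/
def cliqueComplex (G : SimpleGraph V) : Set (Finset V) := {F | G.IsClique (F : Set V)}

/-- The pure `i`-skeleton of `K`: generated by the faces of dimension `i`. -/
def pureSkeleton (K : Set (Finset V)) (i : ℕ) : Set (Finset V) :=
  {G | ∃ F ∈ K, F.card = i + 1 ∧ G ⊆ F}

/-- The link of a face. -/
def linkFace (K : Set (Finset V)) (F : Finset V) : Set (Finset V) :=
  {G | Disjoint F G ∧ F ∪ G ∈ K}

section Homology
variable (k : Type*) [Field k]

/-- Boundary of a single face, w.r.t. a linear order `lo` on the vertices. -/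
noncomputable def bdFace (lo : LinearOrder V) (F : Finset V) : Finset V →₀ k :=
  letI := lo
  ∑ v ∈ F, ((-1 : k) ^ ((F.filter (fun w => w < v)).card)) • Finsupp.single (F.erase v) (1 : k)

/-- The boundary operator of the augmented oriented chain complex, w.r.t. `lo`. -/
noncomputable def bd (lo : LinearOrder V) (c : Finset V →₀ k) : Finset V →₀ k :=
  c.sum fun F a => a • bdFace k lo F

/-- The reduced homology of `K` in the degree of faces of cardinality `j`
(i.e. dimension `j - 1`) vanishes over `k`. -/
def HomologyVanishes (K : Set (Finset V)) (j : ℕ) : Prop :=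
  ∀ lo : LinearOrder V, ∀ c : Finset V →₀ k,
    (∀ F ∈ c.support, F ∈ K ∧ F.card = j) → bd k lo c = 0 →
      ∃ d : Finset V →₀ k, (∀ F ∈ d.support, F ∈ K ∧ F.card = j + 1) ∧ bd k lo d = c

/-- Reisner's criterion: `K` is Cohen–Macaulay over the field `k`. -/
def IsCMover (K : Set (Finset V)) : Prop :=
  ∀ F ∈ K, ∀ j : ℕ, (∃ G ∈ linkFace K F, j < G.card) →
    HomologyVanishes k (linkFace K F) j

/-- `K` is sequentially Cohen–Macaulay over `k`. -/
def IsSeqCMover (K : Set (Finset V)) : Prop :=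
  ∀ i : ℕ, IsCMover k (pureSkeleton K i)

/-- The core of a complex. -/
def core (K : Set (Finset V)) : Set (Finset V) :=
  {F ∈ K | ∀ v ∈ F, ∃ G, IsFacet K G ∧ v ∉ G}

/-- The top reduced homology of `K` is one-dimensional (`≅ k`), where the top
cardinality of a face of `K` is `m`. -/
def TopHomologyIsK (K : Set (Finset V)) (m : ℕ) : Prop :=
  (∃ G ∈ K, G.card = m) ∧ (∀ G ∈ K, G.card ≤ m) ∧
  ∀ lo : LinearOrder V, ∃ c : Finset V →₀ k, c ≠ 0 ∧
    (∀ F ∈ c.support, F ∈ K ∧ F.card = m) ∧ bd k lo c = 0 ∧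
    ∀ c' : Finset V →₀ k, (∀ F ∈ c'.support, F ∈ K ∧ F.card = m) → bd k lo c' = 0 →
      ∃ a : k, c' = a • c

/-- Stanley's criterion: `K` is Gorenstein over `k`. -/
def IsGorensteinOver (K : Set (Finset V)) : Prop :=
  ∀ F ∈ core K, ∃ m : ℕ,
    TopHomologyIsK k (linkFace (core K) F) m ∧
    ∀ j : ℕ, j < m → HomologyVanishes k (linkFace (core K) F) j

end Homology

/-!
Facets of the pure 2-skeleton are triples of pairwise incident edges of `H`: three edges at a
vertex (a star) or the edges of a triangle. Adjacent facets share two edges `s(q, a)`, `s(q, b)`,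
so a full star is adjacent only to triangles through its centre, and a triangle only to stars
centred at its vertices. Call a vertex blocked if it has level `≥ 2` and is not the apex of a
triangle over a level-one edge, or if it has level one and forms a triangle with two level-two
vertices. Since every vertex other than `v` has degree at most `3`, the stars and triangles at
blocked vertices form a union of strong components of the facet graph. If `x` violated the
conclusion, its star would be such a facet, but it is joined to a facet of three edges at `v`,
which is neither.
-/

namespace SimpleGraph

variable {V : Type*} {H : SimpleGraph V}

lemma Adj.dist_le_dist_add_one {a b : V} (h : H.Adj a b) (u : V) :
    H.dist u b ≤ H.dist u a + 1 := by
  rcases h.diff_dist_adj (u := u) with h | h | h <;> omega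

lemma four_le_degree [DecidableEq V] [H.LocallyFinite] {p c₁ c₂ c₃ c₄ : V}
    (h₁ : H.Adj p c₁) (h₂ : H.Adj p c₂) (h₃ : H.Adj p c₃) (h₄ : H.Adj p c₄)
    (h₁₂ : c₁ ≠ c₂) (h₁₃ : c₁ ≠ c₃) (h₁₄ : c₁ ≠ c₄) (h₂₃ : c₂ ≠ c₃) (h₂₄ : c₂ ≠ c₄)
    (h₃₄ : c₃ ≠ c₄) : 4 ≤ H.degree p := by
  rw [← card_neighborFinset_eq_degree]
  calc 4 = #{c₁, c₂, c₃, c₄} := by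
        rw [card_insert_of_notMem (by simp [*]), card_insert_of_notMem (by simp [*]),
          card_pair h₃₄]
    _ ≤ #(H.neighborFinset p) := card_le_card (by
        intro y hy
        simp only [mem_insert, mem_singleton] at hy
        rcases hy with rfl | rfl | rfl | rfl <;> simpa)

variable (H) in
def lineSkeleton : Set (Finset H.edgeSet) := pureSkeleton (cliqueComplex H.lineGraph) 2

lemma isFacet_lineSkeleton_iff {F : Finset H.edgeSet} :
    IsFacet (lineSkeleton H) F ↔ H.lineGraph.IsClique (F : Set H.edgeSet) ∧ #F = 3 := by
  constructor
  · rintro ⟨⟨F', hF', hcard, hsub⟩, hmax⟩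
    obtain rfl := hmax F' ⟨F', hF', hcard, subset_rfl⟩ hsub
    exact ⟨hF', hcard⟩
  · rintro ⟨hcl, hcard⟩
    refine ⟨⟨F, hcl, hcard, subset_rfl⟩, fun G ⟨F', _, hcard', hsub'⟩ hFG => ?_⟩
    exact eq_of_subset_of_card_le hFG ((card_le_card hsub').trans (hcard' ▸ hcard.ge))

def IsStar (F : Finset H.edgeSet) (p : V) : Prop := ∀ e, e ∈ F ↔ p ∈ (e : Sym2 V)

def IsTriangle (F : Finset H.edgeSet) (p a b : V) : Prop :=
  H.Adj p a ∧ H.Adj p b ∧ H.Adj a b ∧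
    ∀ e, e ∈ F ↔ (e : Sym2 V) = s(p, a) ∨ (e : Sym2 V) = s(p, b) ∨ (e : Sym2 V) = s(a, b)

lemma IsTriangle.not_forall_mem {F : Finset H.edgeSet} {p a b : V} (hT : IsTriangle F p a b)
    (q : V) : ¬ ∀ e ∈ F, q ∈ (e : Sym2 V) := by
  obtain ⟨hpa, hpb, hab, hF⟩ := hT
  intro hq
  have h₁ := hq ⟨s(p, a), hpa⟩ ((hF _).mpr (Or.inl rfl))
  have h₂ := hq ⟨s(p, b), hpb⟩ ((hF _).mpr (Or.inr (Or.inl rfl)))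
  have h₃ := hq ⟨s(a, b), hab⟩ ((hF _).mpr (Or.inr (Or.inr rfl)))
  simp only [Sym2.mem_iff] at h₁ h₂ h₃
  grind [hpa.ne, hpb.ne, hab.ne]

lemma mem_or_eq_of_isClique {F : Finset H.edgeSet}
    (hF : H.lineGraph.IsClique (F : Set H.edgeSet)) {e₁ e₂ f : H.edgeSet} (he₁ : e₁ ∈ F)
    (he₂ : e₂ ∈ F) (hf : f ∈ F) (hf₁ : f ≠ e₁) (hf₂ : f ≠ e₂)
    {q a b : V} (h₁ : (e₁ : Sym2 V) = s(q, a)) (h₂ : (e₂ : Sym2 V) = s(q, b)) (hab : a ≠ b) :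
    q ∈ (f : Sym2 V) ∨ (f : Sym2 V) = s(a, b) := by
  obtain ⟨-, y, hyf, hy₁⟩ := lineGraph_adj_iff_exists.mp (hF hf he₁ hf₁)
  obtain ⟨-, z, hzf, hz₂⟩ := lineGraph_adj_iff_exists.mp (hF hf he₂ hf₂)
  rw [h₁, Sym2.mem_iff] at hy₁
  rw [h₂, Sym2.mem_iff] at hz₂
  rcases hy₁ with rfl | rfl
  · exact Or.inl hyf
  rcases hz₂ with rfl | rfl
  · exact Or.inl hzf
  exact Or.inr ((Sym2.mem_and_mem_iff hab).mp ⟨hyf, hzf⟩)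

lemma FacetAdj.exists_pivot [DecidableEq V] {F G : Finset H.edgeSet}
    (h : FacetAdj (lineSkeleton H) F G) :
    ∃ (q a b : V) (e₁ e₂ f g : H.edgeSet), a ≠ b ∧
      (e₁ : Sym2 V) = s(q, a) ∧ (e₂ : Sym2 V) = s(q, b) ∧ F = {e₁, e₂, f} ∧ G = {e₁, e₂, g} ∧
      f ∉ G ∧ g ∉ F ∧ (q ∈ (f : Sym2 V) ∨ (f : Sym2 V) = s(a, b)) ∧
      (q ∈ (g : Sym2 V) ∨ (g : Sym2 V) = s(a, b)) := by
  obtain ⟨hF, hG, hFG, hGF⟩ := h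
  rw [isFacet_lineSkeleton_iff] at hF hG
  obtain ⟨e₁, e₂, hne, hI⟩ := card_eq_two.mp (show #(F ∩ G) = 2 by omega)
  obtain ⟨f, hf⟩ := card_eq_one.mp (show #(F \ G) = 1 by rw [card_sdiff, inter_comm]; omega)
  obtain ⟨g, hg⟩ := card_eq_one.mp (show #(G \ F) = 1 by rw [card_sdiff]; omega)
  have hFe : F = {e₁, e₂, f} := by
    rw [← sdiff_union_inter F G, hI, hf]; ext
    simp only [mem_union, mem_insert, mem_singleton]; tauto
  have hGe : G = {e₁, e₂, g} := by
    rw [← sdiff_union_inter G F, inter_comm, hI, hg]; ext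
    simp only [mem_union, mem_insert, mem_singleton]; tauto
  have hfG : f ∉ G := (mem_sdiff.mp (hf ▸ mem_singleton_self f)).2
  have hgF : g ∉ F := (mem_sdiff.mp (hg ▸ mem_singleton_self g)).2
  have he₁ : e₁ ∈ F ∩ G := hI ▸ mem_insert_self _ _
  have he₂ : e₂ ∈ F ∩ G := hI ▸ mem_insert_of_mem (mem_singleton_self _)
  rw [mem_inter] at he₁ he₂
  obtain ⟨-, q, hq₁, hq₂⟩ := lineGraph_adj_iff_exists.mp (hF.1 he₁.1 he₂.1 hne)
  obtain ⟨a, h₁⟩ := Sym2.mem_iff_exists.mp hq₁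
  obtain ⟨b, h₂⟩ := Sym2.mem_iff_exists.mp hq₂
  have hab : a ≠ b := by rintro rfl; exact hne (Subtype.ext (h₁.trans h₂.symm))
  refine ⟨q, a, b, e₁, e₂, f, g, hab, h₁, h₂, hFe, hGe, hfG, hgF, ?_, ?_⟩
  · exact mem_or_eq_of_isClique hF.1 he₁.1 he₂.1 (hFe ▸ by simp)
      (ne_of_mem_of_not_mem he₁.2 hfG).symm (ne_of_mem_of_not_mem he₂.2 hfG).symm h₁ h₂ hab
  · exact mem_or_eq_of_isClique hG.1 he₁.2 he₂.2 (hGe ▸ by simp)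
      (ne_of_mem_of_not_mem he₁.1 hgF).symm (ne_of_mem_of_not_mem he₂.1 hgF).symm h₁ h₂ hab

lemma FacetAdj.exists_isTriangle_of_isStar [DecidableEq V] {F G : Finset H.edgeSet}
    (h : FacetAdj (lineSkeleton H) F G) {p : V} (hF : IsStar F p) : ∃ a b, IsTriangle G p a b := by
  obtain ⟨q, a, b, e₁, e₂, f, g, hab, h₁, h₂, hFe, hGe, -, hgF, -, hg⟩ := h.exists_pivot
  have hp₁ : p ∈ s(q, a) := h₁ ▸ (hF e₁).mp (by simp [hFe])
  have hp₂ : p ∈ s(q, b) := h₂ ▸ (hF e₂).mp (by simp [hFe])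
  obtain rfl : p = q := by
    simp only [Sym2.mem_iff] at hp₁ hp₂
    grind
  have hg : (g : Sym2 V) = s(a, b) := hg.resolve_left fun hpg => hgF ((hF g).mpr hpg)
  refine ⟨a, b, H.mem_edgeSet.mp (h₁ ▸ e₁.2), H.mem_edgeSet.mp (h₂ ▸ e₂.2),
    H.mem_edgeSet.mp (hg ▸ g.2), fun e => ?_⟩
  simp only [hGe, mem_insert, mem_singleton, Subtype.ext_iff, h₁, h₂, hg]

lemma FacetAdj.exists_forall_mem_of_isTriangle [DecidableEq V] {F G : Finset H.edgeSet}
    (h : FacetAdj (lineSkeleton H) F G) {p a b : V} (hF : IsTriangle F p a b) :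
    ∃ q, (q = p ∨ q = a ∨ q = b) ∧ ∀ e ∈ G, q ∈ (e : Sym2 V) := by
  obtain ⟨q, a', b', e₁, e₂, f, g, hab, h₁, h₂, hFe, hGe, -, hgF, hf, hg⟩ := h.exists_pivot
  have hq : q = p ∨ q = a ∨ q = b := by
    have hq₁ : q ∈ (e₁ : Sym2 V) := h₁ ▸ Sym2.mem_mk_left q a'
    rcases (hF.2.2.2 e₁).mp (by simp [hFe]) with h | h | h <;>
      rw [h, Sym2.mem_iff] at hq₁ <;> tauto
  have hqf : q ∉ (f : Sym2 V) := fun hqf => hF.not_forall_mem q (by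
    simp only [hFe, mem_insert, mem_singleton, forall_eq_or_imp, forall_eq, h₁, h₂]
    exact ⟨Sym2.mem_mk_left _ _, Sym2.mem_mk_left _ _, hqf⟩)
  have hqg : q ∈ (g : Sym2 V) := by
    refine hg.resolve_right fun hg => hgF ?_
    rw [hFe, Subtype.ext (hg.trans (hf.resolve_left hqf).symm)]
    simp
  refine ⟨q, hq, ?_⟩
  simp only [hGe, mem_insert, mem_singleton, forall_eq_or_imp, forall_eq, h₁, h₂]
  exact ⟨Sym2.mem_mk_left _ _, Sym2.mem_mk_left _ _, hqg⟩

lemma isStar_of_forall_mem [DecidableEq V] [H.LocallyFinite] {G : Finset H.edgeSet} {p : V}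
    (hG : #G = 3) (hp : ∀ e ∈ G, p ∈ (e : Sym2 V)) (hdeg : H.degree p ≤ 3) : IsStar G p := by
  have hsub : G.map (Function.Embedding.subtype _) ⊆ H.incidenceFinset p := by
    intro e he
    obtain ⟨e, heG, rfl⟩ := mem_map.mp he
    simpa [incidenceSet] using hp e heG
  have heq := eq_of_subset_of_card_le hsub (by simp [hG, hdeg])
  intro e
  refine ⟨hp e, fun he => ?_⟩
  have : (e : Sym2 V) ∈ G.map (Function.Embedding.subtype _) := by
    rw [heq]; simpa [incidenceSet] using he
  simpa using this

lemma exists_isFacet_forall_mem [DecidableEq V] [H.LocallyFinite] {p : V} (hp : 3 ≤ H.degree p) :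
    ∃ F, IsFacet (lineSkeleton H) F ∧ ∀ e ∈ F, p ∈ (e : Sym2 V) := by
  classical
  obtain ⟨T, hT, hT3⟩ :=
    exists_subset_card_eq (hp.trans (card_incidenceFinset_eq_degree H p).ge)
  have hTE : ∀ e ∈ T, e ∈ H.edgeSet := fun e he =>
    incidenceSet_subset H p (by simpa using hT he)
  have hpT : ∀ e ∈ T.subtype (· ∈ H.edgeSet), p ∈ (e : Sym2 V) := fun e he => by
    simpa [incidenceSet] using hT (mem_subtype.mp he)
  refine ⟨T.subtype (· ∈ H.edgeSet), isFacet_lineSkeleton_iff.mpr ⟨?_, ?_⟩, hpT⟩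
  · exact fun e he e' he' hne => lineGraph_adj_iff_exists.mpr ⟨hne, p, hpT e he, hpT e' he'⟩
  · rw [card_subtype, filter_true_of_mem hTE, hT3]

section Levels

variable (v : V)

variable (H) in
def IsApex (x : V) : Prop :=
  H.dist v x = 2 ∧ ∃ a b, H.dist v a = 1 ∧ H.dist v b = 1 ∧ H.Adj a b ∧ H.Adj x a ∧ H.Adj x b

variable (H) in
def IsBlocked (p : V) : Prop :=
  (2 ≤ H.dist v p ∧ ¬ H.IsApex v p) ∨
    (H.dist v p = 1 ∧ ∃ w z, H.Adj w z ∧ H.Adj p w ∧ H.Adj p z ∧ H.dist v w = 2 ∧ H.dist v z = 2)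

variable (H) in
def IsBlockedFacet (F : Finset H.edgeSet) : Prop :=
  ∃ p, H.IsBlocked v p ∧ (IsStar F p ∨ ∃ a b, IsTriangle F p a b)

variable {v}

lemma IsBlocked.ne {p : V} (hp : H.IsBlocked v p) : p ≠ v := by
  rintro rfl
  rcases hp with ⟨h, -⟩ | ⟨h, -⟩ <;> simp at h

lemma not_isBlockedFacet_of_forall_mem {F : Finset H.edgeSet} (hF : #F = 3)
    (hv : ∀ e ∈ F, v ∈ (e : Sym2 V)) : ¬ H.IsBlockedFacet v F := by
  rintro ⟨p, hp, hstar | ⟨a, b, htri⟩⟩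
  · obtain ⟨e₁, he₁, e₂, he₂, hne⟩ := one_lt_card.mp (show 1 < #F by omega)
    have hedge {e} (he : e ∈ F) : (e : Sym2 V) = s(p, v) :=
      (Sym2.mem_and_mem_iff hp.ne).mp ⟨(hstar e).mp he, hv e he⟩
    exact hne (Subtype.ext ((hedge he₁).trans (hedge he₂).symm))
  · exact htri.not_forall_mem v hv

variable [DecidableEq V] [H.LocallyFinite]

lemma IsApex.dist_eq_one_of_adj (hdeg : ∀ w, w ≠ v → H.degree w ≤ 3) {a p b : V}
    (ha : H.IsApex v a) (hap : H.Adj a p) (hab : H.Adj a b) (hpb : H.Adj p b) : H.dist v p = 1 := by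
  obtain ⟨ha2, c, d, hc, hd, hcd, hac, had⟩ := ha
  by_contra hp1
  have hav : a ≠ v := by rintro rfl; simp at ha2
  have hpv : p ≠ v := by rintro rfl; simp [dist_eq_one_iff_adj.mpr hap.symm] at ha2
  have hne_v {y : V} (hy : H.dist v y = 1) : y ≠ v := by rintro rfl; simp at hy
  have hpc : p ≠ c := by rintro rfl; exact hp1 hc
  have hpd : p ≠ d := by rintro rfl; exact hp1 hd
  -- if `b` were a level-one vertex `y`, then `y` would have the four neighbours `v, z, a, p`
  have hb {y z : V} (hy : H.dist v y = 1) (hz : H.dist v z = 1) (hyz : H.Adj y z)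
      (haz : H.Adj a z) (hpz : p ≠ z) (hby : b = y) : False := by
    subst hby
    have := four_le_degree (dist_eq_one_iff_adj.mp hy).symm hyz hab.symm hpb.symm
      (hne_v hz).symm hav.symm hpv.symm haz.ne.symm hpz.symm hap.ne
    have := hdeg b (hne_v hy)
    omega
  have hbc : b ≠ c := hb hc hd hcd had hpd
  have hbd : b ≠ d := hb hd hc hcd.symm hac hpc
  have := four_le_degree hac had hap hab hcd.ne hpc.symm hbc.symm hpd.symm hbd.symm hpb.ne
  have := hdeg a hav
  omega

lemma isBlocked_of_adj_of_two_le_dist (hdeg : ∀ w, w ≠ v → H.degree w ≤ 3) {p a b : V}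
    (hp : 2 ≤ H.dist v p) (hpApex : ¬ H.IsApex v p) (hpa : H.Adj p a) (hpb : H.Adj p b)
    (hab : H.Adj a b) : a ≠ v ∧ H.IsBlocked v a := by
  have hpa₁ := hpa.dist_le_dist_add_one v
  have hpa₂ := hpa.symm.dist_le_dist_add_one v
  have hpb₂ := hpb.symm.dist_le_dist_add_one v
  have hab₁ := hab.dist_le_dist_add_one v
  have hav : a ≠ v := by rintro rfl; simp at hpa₂; omega
  refine ⟨hav, ?_⟩
  by_cases ha : 2 ≤ H.dist v a
  · exact Or.inl ⟨ha, fun hApex => by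
      have := hApex.dist_eq_one_of_adj hdeg hpa.symm hab hpb; omega⟩
  by_cases hb : H.dist v b = 1
  · exact absurd ⟨by omega, a, b, by omega, hb, hab, hpa, hpb⟩ hpApex
  · exact Or.inr ⟨by omega, p, b, hpb, hpa.symm, hab, by omega, by omega⟩

lemma isBlocked_of_adj_of_dist_eq_one (hdeg : ∀ w, w ≠ v → H.degree w ≤ 3) {p a b w z : V}
    (hp : H.dist v p = 1) (hwz : H.Adj w z) (hpw : H.Adj p w) (hpz : H.Adj p z)
    (hw : H.dist v w = 2) (hz : H.dist v z = 2) (hpa : H.Adj p a) (hpb : H.Adj p b)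
    (hab : H.Adj a b) : a ≠ v ∧ H.IsBlocked v a := by
  have hwv : w ≠ v := by rintro rfl; simp at hw
  have hzv : z ≠ v := by rintro rfl; simp at hz
  -- `p` already has the three neighbours `v, w, z`
  have hnbr {y : V} (hpy : H.Adj p y) (hyv : y ≠ v) : H.dist v y = 2 := by
    by_contra hy
    have hyw : y ≠ w := by rintro rfl; exact hy hw
    have hyz : y ≠ z := by rintro rfl; exact hy hz
    have := four_le_degree (dist_eq_one_iff_adj.mp hp).symm hpw hpz hpy hwv.symm hzv.symm
      hyv.symm hwz.ne hyw.symm hyz.symm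
    have := hdeg p (by rintro rfl; simp at hp)
    omega
  have hav : a ≠ v := by
    rintro rfl
    have := hnbr hpb hab.ne.symm
    simp [dist_eq_one_iff_adj.mpr hab] at this
  have hbv : b ≠ v := by
    rintro rfl
    have := hnbr hpa hab.ne
    simp [dist_eq_one_iff_adj.mpr hab.symm] at this
  refine ⟨hav, Or.inl ⟨(hnbr hpa hav).ge, fun hApex => ?_⟩⟩
  have := hApex.dist_eq_one_of_adj hdeg hab hpa.symm hpb.symm
  simp [hnbr hpb hbv] at this

lemma IsBlocked.of_adj (hdeg : ∀ w, w ≠ v → H.degree w ≤ 3) {p a b : V}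
    (hp : H.IsBlocked v p) (hpa : H.Adj p a) (hpb : H.Adj p b) (hab : H.Adj a b) :
    a ≠ v ∧ H.IsBlocked v a := by
  rcases hp with ⟨hp, hpApex⟩ | ⟨hp, w, z, hwz, hpw, hpz, hw, hz⟩
  · exact isBlocked_of_adj_of_two_le_dist hdeg hp hpApex hpa hpb hab
  · exact isBlocked_of_adj_of_dist_eq_one hdeg hp hwz hpw hpz hw hz hpa hpb hab

lemma IsBlockedFacet.of_facetAdj (hdeg : ∀ w, w ≠ v → H.degree w ≤ 3)
    {F G : Finset H.edgeSet} (hF : H.IsBlockedFacet v F) (h : FacetAdj (lineSkeleton H) F G) :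
    H.IsBlockedFacet v G := by
  obtain ⟨p, hp, hstar | ⟨a, b, htri⟩⟩ := hF
  · obtain ⟨a, b, hG⟩ := h.exists_isTriangle_of_isStar hstar
    exact ⟨p, hp, Or.inr ⟨a, b, hG⟩⟩
  obtain ⟨q, hq, hGq⟩ := h.exists_forall_mem_of_isTriangle htri
  obtain ⟨hpa, hpb, hab, -⟩ := htri
  have hqv : q ≠ v ∧ H.IsBlocked v q := by
    rcases hq with rfl | rfl | rfl
    · exact ⟨hp.ne, hp⟩
    · exact hp.of_adj hdeg hpa hpb hab
    · exact hp.of_adj hdeg hpb hpa hab.symm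
  have hG3 : #G = 3 := (isFacet_lineSkeleton_iff.mp h.2.1).2
  exact ⟨q, hqv.2, Or.inl (isStar_of_forall_mem hG3 hGq (hdeg q hqv.1))⟩

lemma IsBlockedFacet.of_reflTransGen (hdeg : ∀ w, w ≠ v → H.degree w ≤ 3)
    {F G : Finset H.edgeSet} (hF : H.IsBlockedFacet v F)
    (h : Relation.ReflTransGen (FacetAdj (lineSkeleton H)) F G) : H.IsBlockedFacet v G := by
  induction h with
  | refl => exact hF
  | tail _ hadj ih => exact ih.of_facetAdj hdeg hadj

end Levels

end SimpleGraph

theorem stmt16_general {V : Type} [DecidableEq V] [Fintype V] (H : SimpleGraph V)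
    [DecidableRel H.Adj] (v : V) (r : ℕ) (hr : 3 < r)
    (hdegv : H.degree v = r) (hdeg : ∀ w : V, w ≠ v → H.degree w ≤ 3)
    (hsc : StronglyConnected (pureSkeleton (cliqueComplex (SimpleGraph.lineGraph H)) 2))
    (x : V) (hx : 2 ≤ H.dist v x) (hdx : H.degree x = 3) :
    H.dist v x = 2 ∧ ∃ a b : V, H.dist v a = 1 ∧ H.dist v b = 1 ∧ H.Adj a b ∧
      H.Adj x a ∧ H.Adj x b := by
  by_contra hxApex
  obtain ⟨Fx, hFx, hxFx⟩ := exists_isFacet_forall_mem (H := H) (p := x) hdx.ge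
  obtain ⟨Fv, hFv, hvFv⟩ := exists_isFacet_forall_mem (H := H) (p := v) (by omega)
  have hFxBlocked : H.IsBlockedFacet v Fx :=
    ⟨x, Or.inl ⟨hx, hxApex⟩,
      Or.inl (isStar_of_forall_mem (isFacet_lineSkeleton_iff.mp hFx).2 hxFx hdx.le)⟩
  exact not_isBlockedFacet_of_forall_mem (isFacet_lineSkeleton_iff.mp hFv).2 hvFv
    (hFxBlocked.of_reflTransGen hdeg (hsc.2 Fx Fv hFx hFv))

theorem stmt16 {V : Type} [DecidableEq V] [Fintype V] (H : SimpleGraph V)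
    [DecidableRel H.Adj] (hconn : H.Connected) (v : V) (r : ℕ) (hr : 3 < r)
    (hdegv : H.degree v = r) (hdeg : ∀ w : V, w ≠ v → H.degree w ≤ 3)
    (htri : ∀ w : V, H.degree w = 2 → ∃ a b : V, H.Adj w a ∧ H.Adj w b ∧ H.Adj a b)
    (hsc : StronglyConnected (pureSkeleton (cliqueComplex (SimpleGraph.lineGraph H)) 2))
    (x : V) (hx : 2 ≤ H.dist v x) (hdx : H.degree x = 3) :
    H.dist v x = 2 ∧ ∃ a b : V, H.dist v a = 1 ∧ H.dist v b = 1 ∧ H.Adj a b ∧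
      H.Adj x a ∧ H.Adj x b :=
  stmt16_general H v r hr hdegv hdeg hsc x hx hdx
end

section
/- Let H be a simple graph with at least one edge in which every vertex has degree at most 3, and let G = L(H). If every connected component of G is a cycle or a path, then Δ(G) is vertex decomposable if and only if it is sequentially Cohen–Macaulay over some field. -/
open Finset SimpleGraph

variable {V : Type*} [DecidableEq V]

/-!
Since the components of `G = L(H)` are paths and cycles, every vertex of `G` has at most two
neighbours. For such a finite graph, vertex decomposability of the clique complex and sequential
Cohen–Macaulayness over any field are both equivalent to: all non-isolated vertices of `G` lie in
one connected component.

* Vertex decomposable ⇒ connected holds for every complex: deleting a shedding vertex never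
  separates the remaining non-isolated vertices of the 1-skeleton.
* Sequentially Cohen–Macaulay ⇒ connected: Reisner's criterion for the pure 1-skeleton at the
  empty face says `H̃₀ = 0`.
* Connected ⇒ sequentially Cohen–Macaulay: the pure skeleta are a set of points, a connected
  graph, and (as cliques have at most three vertices and a triangle is a whole component) at most
  one simplex, whose links are cones.
* Connected ⇒ vertex decomposable, by induction on the vertex set: an isolated vertex, a leaf whose
  neighbour has a second neighbour, or any vertex of a cycle of length at least four is a shedding
  vertex whose link is discrete and whose deletion stays connected (for the cycle by the handshake
  lemma); if there is no such vertex the graph is a point, an edge or a triangle, i.e. a simplex.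
-/

theorem card_filter_lt_insert_add_card_filter_lt {α : Type*} [LinearOrder α] [DecidableEq α]
    {F : Finset α} {u v : α} (hu : u ∈ F) (hv : v ∉ F) :
    #((insert v F).filter (· < u)) + #(F.filter (· < v)) =
      #(F.filter (· < u)) + #((F.erase u).filter (· < v)) + 1 := by
  have huv : u ≠ v := fun h => hv (h ▸ hu)
  have h1 : #((insert v F).filter (· < u)) = #(F.filter (· < u)) + if v < u then 1 else 0 := by
    rw [filter_insert]
    split_ifs <;> simp [card_insert_of_notMem, hv]
  have h2 : #(F.filter (· < v)) = #((F.erase u).filter (· < v)) + if u < v then 1 else 0 := by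
    rw [filter_erase]
    split_ifs with h
    · exact (card_erase_add_one (mem_filter.2 ⟨hu, h⟩)).symm
    · rw [erase_eq_of_notMem (by simp [h]), add_zero]
  rcases huv.lt_or_gt with h | h <;> simp [h1, h2, h, not_lt_of_gt h] <;> omega

section ReducedHomology

variable {W : Type*} [DecidableEq W] (k : Type*) [Field k] (lo : LinearOrder W)

theorem bd_eq_linearCombination (c : Finset W →₀ k) :
    bd k lo c = Finsupp.linearCombination k (bdFace k lo) c := by
  rw [Finsupp.linearCombination_apply]; rfl

theorem bdFace_singleton (x : W) : bdFace k lo {x} = Finsupp.single ∅ 1 := by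
  simp [bdFace, filter_singleton]

theorem bdFace_pair {a b : W} (hab : a ≠ b) :
    bdFace k lo {a, b} = Finsupp.single {a} 1 - Finsupp.single {b} 1 ∨
      bdFace k lo {a, b} = Finsupp.single {b} 1 - Finsupp.single {a} 1 := by
  let _ := lo
  have hb : ({a, b} : Finset W).erase b = {a} := by
    rw [pair_comm]; exact erase_insert (by simpa using hab.symm)
  rcases hab.lt_or_gt with h | h
  · right
    simp [bdFace, sum_pair hab, filter_insert, filter_singleton, h, not_lt_of_gt h, hab, hb,
      sub_eq_add_neg, add_comm]
  · left
    simp [bdFace, sum_pair hab, filter_insert, filter_singleton, h, not_lt_of_gt h, hab, hb,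
      sub_eq_add_neg, add_comm]

noncomputable def coneFace (v : W) (F : Finset W) : Finset W →₀ k :=
  letI := lo
  if v ∈ F then 0 else (-1 : k) ^ #(F.filter (· < v)) • Finsupp.single (insert v F) 1

theorem cone_bdFace_of_mem {v : W} {F : Finset W} (hv : v ∈ F) :
    Finsupp.linearCombination k (coneFace k lo v) (bdFace k lo F) = Finsupp.single F 1 := by
  let _ := lo
  rw [bdFace, map_sum, sum_eq_single v]
  · have hfilter : (F.erase v).filter (· < v) = F.filter (· < v) := by
      rw [filter_erase, erase_eq_of_notMem (by simp)]
    rw [map_smul, Finsupp.linearCombination_single, one_smul, coneFace, if_neg (notMem_erase v F),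
      insert_erase hv, hfilter, smul_smul, ← pow_add, Even.neg_one_pow ⟨_, rfl⟩, one_smul]
  · intro u _ huv
    rw [map_smul, Finsupp.linearCombination_single, one_smul, coneFace,
      if_pos (mem_erase.2 ⟨Ne.symm huv, hv⟩), smul_zero]
  · exact fun h => absurd hv h

theorem bd_coneFace_add_cone_bdFace_of_notMem {v : W} {F : Finset W} (hv : v ∉ F) :
    Finsupp.linearCombination k (bdFace k lo) (coneFace k lo v F) +
      Finsupp.linearCombination k (coneFace k lo v) (bdFace k lo F) = Finsupp.single F 1 := by
  let _ := lo
  have hfilter : (insert v F).filter (· < v) = F.filter (· < v) := by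
    rw [filter_insert, if_neg (lt_irrefl v)]
  have hcross : ∀ u ∈ F, (-1 : k) ^ #(F.filter (· < v)) •
      ((-1 : k) ^ #((insert v F).filter (· < u)) • Finsupp.single ((insert v F).erase u) 1) +
      Finsupp.linearCombination k (coneFace k lo v)
        ((-1 : k) ^ #(F.filter (· < u)) • Finsupp.single (F.erase u) 1) = 0 := by
    intro u hu
    have huv : u ≠ v := fun h => hv (h ▸ hu)
    rw [map_smul, Finsupp.linearCombination_single, one_smul, coneFace,
      if_neg (fun h => hv (mem_of_mem_erase h)), erase_insert_of_ne huv.symm, smul_smul,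
      smul_smul, ← pow_add, ← pow_add, add_comm (#(F.filter (· < v))),
      card_filter_lt_insert_add_card_filter_lt hu hv, pow_succ, mul_neg_one, neg_smul,
      neg_add_cancel]
  rw [coneFace, if_neg hv, map_smul, Finsupp.linearCombination_single, one_smul, bdFace,
    sum_insert hv, hfilter, erase_insert hv, smul_add, smul_smul, ← pow_add,
    Even.neg_one_pow ⟨_, rfl⟩, one_smul, bdFace, map_sum, smul_sum, add_assoc,
    ← sum_add_distrib, sum_eq_zero hcross, add_zero]

theorem bd_cone_add_cone_bd (v : W) (c : Finset W →₀ k) :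
    bd k lo (Finsupp.linearCombination k (coneFace k lo v) c) +
      Finsupp.linearCombination k (coneFace k lo v) (bd k lo c) = c := by
  simp only [bd_eq_linearCombination]
  induction c using Finsupp.induction_linear with
  | zero => simp
  | add c d hc hd => simp only [map_add]; rw [add_add_add_comm, hc, hd]
  | single F a =>
    simp only [Finsupp.linearCombination_single, map_smul, ← smul_add]
    by_cases hv : v ∈ F
    · rw [coneFace, if_pos hv, map_zero, zero_add,
        cone_bdFace_of_mem k lo hv, Finsupp.smul_single_one]
    · rw [bd_coneFace_add_cone_bdFace_of_notMem k lo hv, Finsupp.smul_single_one]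

theorem homologyVanishes_of_isCone {K : Set (Finset W)} {v : W} (hK : ∀ F ∈ K, insert v F ∈ K)
    (j : ℕ) : HomologyVanishes k K j := by
  intro lo c hc hbd
  refine ⟨Finsupp.linearCombination k (coneFace k lo v) c, fun F' hF' => ?_, ?_⟩
  · obtain ⟨F, hF, hF'⟩ := mem_biUnion.1 (Finsupp.support_sum hF')
    have hF' := Finsupp.support_smul hF'
    rw [coneFace] at hF'
    split_ifs at hF' with hv
    · simp at hF'
    · rw [mem_singleton.1 (Finsupp.support_single_subset (Finsupp.support_smul hF'))]
      exact ⟨hK F (hc F hF).1, by rw [card_insert_of_notMem hv, (hc F hF).2]⟩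
  · simpa [hbd] using bd_cone_add_cone_bd k lo v c

def oneSkeleton (K : Set (Finset W)) : SimpleGraph W where
  Adj x y := x ≠ y ∧ {x, y} ∈ K
  symm := ⟨fun x y h => ⟨h.1.symm, pair_comm x y ▸ h.2⟩⟩
  loopless := ⟨fun _ h => h.1 rfl⟩

theorem homologyVanishes_zero {K : Set (Finset W)} {x : W} (hx : {x} ∈ K) :
    HomologyVanishes k K 0 := by
  intro lo c hc _
  refine ⟨c ∅ • Finsupp.single {x} 1, fun F hF => ?_, ?_⟩
  · rw [mem_singleton.1 (Finsupp.support_single_subset (Finsupp.support_smul hF))]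
    exact ⟨hx, card_singleton x⟩
  · have hc : c = Finsupp.single ∅ (c ∅) := by
      ext F
      by_cases hF : F = ∅
      · rw [hF, Finsupp.single_eq_same]
      · rw [Finsupp.single_eq_of_ne hF, ← Finsupp.notMem_support_iff]
        exact fun hF' => hF (card_eq_zero.1 (hc F hF').2)
    rw [bd_eq_linearCombination, map_smul, Finsupp.linearCombination_single, one_smul,
      bdFace_singleton, Finsupp.smul_single_one, ← hc]

theorem exists_bd_eq_of_reachable {K : Set (Finset W)} {u w : W}
    (h : (oneSkeleton K).Reachable u w) :
    ∃ d : Finset W →₀ k, (∀ F ∈ d.support, F ∈ K ∧ #F = 2) ∧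
      bd k lo d = Finsupp.single {u} 1 - Finsupp.single {w} 1 := by
  rw [reachable_iff_reflTransGen] at h
  induction h with
  | refl => exact ⟨0, by simp, by simp [bd_eq_linearCombination]⟩
  | @tail a b _ hab ih =>
    obtain ⟨d, hd, hbd⟩ := ih
    obtain ⟨s, hs⟩ : ∃ s : k, bd k lo (Finsupp.single {a, b} s) =
        Finsupp.single {a} 1 - Finsupp.single {b} 1 := by
      simp only [bd_eq_linearCombination, Finsupp.linearCombination_single]
      rcases bdFace_pair k lo hab.1 with h | h
      · exact ⟨1, by rw [h, one_smul]⟩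
      · exact ⟨-1, by rw [h, neg_one_smul, neg_sub]⟩
    refine ⟨d + Finsupp.single {a, b} s, fun F hF => ?_, ?_⟩
    · rcases mem_union.1 (Finsupp.support_add hF) with hF | hF
      · exact hd F hF
      · rw [mem_singleton.1 (Finsupp.support_single_subset hF)]
        exact ⟨hab.2, card_pair hab.1⟩
    · rw [bd_eq_linearCombination, map_add, ← bd_eq_linearCombination, ← bd_eq_linearCombination,
        hbd, hs, sub_add_sub_cancel]

theorem bd_apply_empty {c : Finset W →₀ k} (hc : ∀ F ∈ c.support, #F = 1) :
    bd k lo c ∅ = c.sum fun _ a => a := by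
  rw [bd, Finsupp.sum, Finsupp.finsetSum_apply]
  refine sum_congr rfl fun F hF => ?_
  obtain ⟨x, rfl⟩ := card_eq_one.1 (hc F hF)
  simp [bdFace_singleton]

/-- A `0`-cycle has coefficient sum `0` (`bd_apply_empty`), so it is a combination of the
differences `{u} - {x₀}`, each of which bounds a path. -/
theorem homologyVanishes_one {K : Set (Finset W)}
    (h : ∀ x y, {x} ∈ K → {y} ∈ K → (oneSkeleton K).Reachable x y) :
    HomologyVanishes k K 1 := by
  intro lo c hc hbd
  by_cases hc0 : c = 0
  · exact ⟨0, by simp, by simp [hc0, bd_eq_linearCombination]⟩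
  obtain ⟨F₀, hF₀⟩ := Finsupp.support_nonempty_iff.2 hc0
  obtain ⟨x₀, rfl⟩ := card_eq_one.1 (hc F₀ hF₀).2
  have hpath : ∀ F ∈ c.support, ∃ d : Finset W →₀ k, (∀ G ∈ d.support, G ∈ K ∧ #G = 2) ∧
      bd k lo d = Finsupp.single F 1 - Finsupp.single {x₀} 1 := by
    intro F hF
    obtain ⟨x, rfl⟩ := card_eq_one.1 (hc F hF).2
    exact exists_bd_eq_of_reachable k lo (h x x₀ (hc _ hF).1 (hc _ hF₀).1)
  choose! d hd hbd_d using hpath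
  have hsum : (c.sum fun _ a => a) = 0 := by
    rw [← bd_apply_empty k lo fun F hF => (hc F hF).2, hbd, Finsupp.zero_apply]
  refine ⟨c.sum fun F a => a • d F, fun G hG => ?_, ?_⟩
  · obtain ⟨F, hF, hG⟩ := mem_biUnion.1 (Finsupp.support_sum hG)
    exact hd F hF G (Finsupp.support_smul hG)
  · calc bd k lo (c.sum fun F a => a • d F)
        = c.sum fun F a => Finsupp.single F a - a • Finsupp.single {x₀} 1 := by
          rw [bd_eq_linearCombination, map_finsuppSum]
          refine Finsupp.sum_congr fun F hF => ?_
          rw [map_smul, ← bd_eq_linearCombination, hbd_d F hF, smul_sub, Finsupp.smul_single_one]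
      _ = c - (c.sum fun _ a => a) • Finsupp.single {x₀} 1 := by
          rw [Finsupp.sum_sub, Finsupp.sum_single, Finsupp.sum, Finsupp.sum, sum_smul]
      _ = c := by rw [hsum, zero_smul, sub_zero]

/-- The indicator of the component of `x`, read off on vertices, vanishes on the boundary of
every edge but not on the cycle `{x} - {y}` unless `y` lies in that component. -/
theorem reachable_of_homologyVanishes_one {K : Set (Finset W)} (hK : HomologyVanishes k K 1)
    {x y : W} (hx : {x} ∈ K) (hy : {y} ∈ K) : (oneSkeleton K).Reachable x y := by
  classical
  let lo : LinearOrder W := IsWellOrder.linearOrder WellOrderingRel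
  let c : Finset W →₀ k := Finsupp.single {x} 1 - Finsupp.single {y} 1
  have hc : ∀ F ∈ c.support, F ∈ K ∧ #F = 1 := by
    intro F hF
    rcases mem_union.1 (Finsupp.support_sub hF) with hF | hF <;>
      rw [mem_singleton.1 (Finsupp.support_single_subset hF)]
    exacts [⟨hx, card_singleton x⟩, ⟨hy, card_singleton y⟩]
  obtain ⟨d, hd, hbd⟩ := hK lo c hc (by simp [c, bd_eq_linearCombination, bdFace_singleton])
  let φ := Finsupp.linearCombination k
    fun F : Finset W => if ∃ z ∈ F, (oneSkeleton K).Reachable x z then (1 : k) else 0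
  have hφ_edge : ∀ F ∈ d.support, φ (bdFace k lo F) = 0 := by
    intro F hF
    obtain ⟨a, b, hab, rfl⟩ := card_eq_two.1 (hd F hF).2
    have hreach : (oneSkeleton K).Reachable x a ↔ (oneSkeleton K).Reachable x b :=
      ⟨fun h => h.trans (Adj.reachable ⟨hab, (hd _ hF).1⟩),
        fun h => h.trans (Adj.reachable ⟨hab.symm, pair_comm a b ▸ (hd _ hF).1⟩)⟩
    rcases bdFace_pair k lo hab with h | h <;> simp [φ, h, hreach]
  have hφ : φ c = 0 := by
    rw [← hbd, bd, map_finsuppSum]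
    exact sum_eq_zero fun F hF => by simp only [map_smul, hφ_edge F hF, smul_zero]
  by_contra hxy
  simp [φ, c, hxy] at hφ

end ReducedHomology

section Graphs

variable {W : Type*} {Γ : SimpleGraph W}

def AtMostTwoNeighbors (Γ : SimpleGraph W) : Prop :=
  ∀ ⦃x y z t : W⦄, Γ.Adj x y → Γ.Adj x z → Γ.Adj x t → y = z ∨ y = t ∨ z = t

theorem AtMostTwoNeighbors.eq_or_eq (h2 : AtMostTwoNeighbors Γ) {x y z t : W} (hy : Γ.Adj x y)
    (hz : Γ.Adj x z) (hyz : y ≠ z) (ht : Γ.Adj x t) : t = y ∨ t = z := by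
  rcases h2 hy hz ht with h | h | h
  exacts [absurd h hyz, .inl h.symm, .inr h.symm]

theorem AtMostTwoNeighbors.mono {Γ' : SimpleGraph W} (h2 : AtMostTwoNeighbors Γ) (h : Γ' ≤ Γ) :
    AtMostTwoNeighbors Γ' :=
  fun _ _ _ _ hy hz ht => h2 (h hy) (h hz) (h ht)

theorem AtMostTwoNeighbors.of_embedding {W' : Type*} {Γ' : SimpleGraph W'}
    (h2 : AtMostTwoNeighbors Γ') (f : Γ ↪g Γ') : AtMostTwoNeighbors Γ := by
  intro x y z t hy hz ht
  simpa only [f.injective.eq_iff] using h2 (f.map_adj_iff.2 hy) (f.map_adj_iff.2 hz)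
    (f.map_adj_iff.2 ht)

theorem atMostTwoNeighbors_of_forall_connectedComponent
    (h : ∀ c : Γ.ConnectedComponent, AtMostTwoNeighbors (Γ.induce c.supp)) :
    AtMostTwoNeighbors Γ := by
  intro x y z t hy hz ht
  have hmem : ∀ {w}, Γ.Adj x w → w ∈ (Γ.connectedComponentMk x).supp :=
    fun hw => (ConnectedComponent.connectedComponentMk_eq_of_adj hw).symm
  simpa using h (Γ.connectedComponentMk x) (x := ⟨x, rfl⟩) (y := ⟨y, hmem hy⟩)
    (z := ⟨z, hmem hz⟩) (t := ⟨t, hmem ht⟩) hy hz ht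

theorem atMostTwoNeighbors_pathGraph (n : ℕ) : AtMostTwoNeighbors (pathGraph n) := by
  intro x y z t hy hz ht
  simp only [pathGraph_adj, Fin.ext_iff] at hy hz ht ⊢
  omega

theorem atMostTwoNeighbors_cycleGraph : ∀ n, AtMostTwoNeighbors (cycleGraph n)
  | 0 => fun x => x.elim0
  | 1 => fun _ _ _ _ hy => absurd hy cycleGraph_one_adj
  | n + 2 => by
    intro x y z t hy hz ht
    have key : ∀ {w : Fin (n + 2)}, (cycleGraph (n + 2)).Adj x w → w = x - 1 ∨ w = x + 1 := by
      intro w hw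
      rw [cycleGraph_adj] at hw
      rcases hw with h | h
      · left; rw [← h]; abel
      · right; rw [← h]; abel
    rcases key hy with rfl | rfl <;> rcases key hz with rfl | rfl <;>
      rcases key ht with rfl | rfl <;> simp

theorem SimpleGraph.Reachable.of_pairwise (hc : Γ.support.Pairwise Γ.Reachable) {x y : W}
    (hx : x ∈ Γ.support) (hy : y ∈ Γ.support) : Γ.Reachable x y := by
  by_cases hxy : x = y
  · exact hxy ▸ .rfl
  · exact hc hx hy hxy

theorem SimpleGraph.Reachable.mem_of_forall_adj_mem {S : Set W}
    (hS : ∀ x ∈ S, ∀ y, Γ.Adj x y → y ∈ S) {x y : W} (h : Γ.Reachable x y) (hx : x ∈ S) :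
    y ∈ S := by
  rw [reachable_iff_reflTransGen] at h
  induction h with
  | refl => exact hx
  | tail _ hbc ih => exact hS _ ih _ hbc

theorem isClique_of_forall_adj_mem {A : Finset W} (hc : Γ.support.Pairwise Γ.Reachable)
    (hA : (A : Set W) ⊆ Γ.support) {S : Set W} (hS : Γ.IsClique S)
    (hclosed : ∀ x ∈ S, ∀ y, Γ.Adj x y → y ∈ S) {s : W} (hs : s ∈ S) (hs' : s ∈ Γ.support) :
    Γ.IsClique (A : Set W) :=
  hS.subset fun _ hx => (Reachable.of_pairwise hc hs' (hA hx)).mem_of_forall_adj_mem hclosed hs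

theorem SimpleGraph.Reachable.deleteIncidenceSet {v p q : W}
    (hN : ∀ ⦃a b⦄, Γ.Adj v a → Γ.Adj v b → (Γ.deleteIncidenceSet v).Reachable a b)
    (h : Γ.Reachable p q) (hp : p ≠ v) (hq : q ≠ v) : (Γ.deleteIncidenceSet v).Reachable p q := by
  suffices (q ≠ v → (Γ.deleteIncidenceSet v).Reachable p q) ∧
      (q = v → ∀ a, Γ.Adj v a → (Γ.deleteIncidenceSet v).Reachable p a) from this.1 hq
  clear hq
  rw [reachable_iff_reflTransGen] at h
  induction h with
  | refl => exact ⟨fun _ => .rfl, fun h => absurd h hp⟩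
  | @tail b c _ hbc ih =>
    refine ⟨fun hc => ?_, ?_⟩
    · by_cases hb : b = v
      · exact ih.2 hb c (hb ▸ hbc)
      · exact (ih.1 hb).trans (deleteIncidenceSet_adj.2 ⟨hbc, hb, hc⟩).reachable
    · rintro rfl a ha
      have hb : b ≠ c := hbc.ne
      exact (ih.1 hb).trans (hN hbc.symm ha)

theorem pairwise_reachable_deleteIncidenceSet (hc : Γ.support.Pairwise Γ.Reachable) {v : W}
    (hN : ∀ ⦃a b⦄, Γ.Adj v a → Γ.Adj v b → (Γ.deleteIncidenceSet v).Reachable a b) :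
    (Γ.deleteIncidenceSet v).support.Pairwise (Γ.deleteIncidenceSet v).Reachable := by
  rintro p hp q hq hpq
  obtain ⟨p', hp⟩ := (mem_support _).1 hp
  obtain ⟨q', hq⟩ := (mem_support _).1 hq
  rw [deleteIncidenceSet_adj] at hp hq
  exact (hc ((mem_support _).2 ⟨p', hp.1⟩) ((mem_support _).2 ⟨q', hq.1⟩) hpq).deleteIncidenceSet
    hN hp.2.1 hq.2.1

theorem AtMostTwoNeighbors.mem_of_isClique [DecidableEq W] (h2 : AtMostTwoNeighbors Γ)
    {T : Finset W} (hT : Γ.IsClique (T : Set W)) (h3 : 3 ≤ #T) {x y : W} (hx : x ∈ T)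
    (hxy : Γ.Adj x y) : y ∈ T := by
  obtain ⟨a, ha, b, hb, hab⟩ :=
    one_lt_card.1 (by rw [card_erase_of_mem hx]; omega : 1 < #(T.erase x))
  have hadj : ∀ {c}, c ∈ T.erase x → Γ.Adj x c := fun hc =>
    hT hx (mem_of_mem_erase hc) (ne_of_mem_erase hc).symm
  rcases h2.eq_or_eq (hadj ha) (hadj hb) hab hxy with rfl | rfl
  exacts [mem_of_mem_erase ha, mem_of_mem_erase hb]

theorem AtMostTwoNeighbors.card_le_three [DecidableEq W] (h2 : AtMostTwoNeighbors Γ) {T : Finset W}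
    (hT : Γ.IsClique (T : Set W)) : #T ≤ 3 := by
  by_contra! h
  obtain ⟨x, hx⟩ := card_pos.1 (by omega : 0 < #T)
  obtain ⟨y, z, t, hy, hz, ht, hyz, hyt, hzt⟩ :=
    two_lt_card_iff.1 (by rw [card_erase_of_mem hx]; omega : 2 < #(T.erase x))
  have hadj : ∀ {c}, c ∈ T.erase x → Γ.Adj x c := fun hc =>
    hT hx (mem_of_mem_erase hc) (ne_of_mem_erase hc).symm
  rcases h2 (hadj hy) (hadj hz) (hadj ht) with h | h | h
  exacts [hyz h, hyt h, hzt h]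

theorem AtMostTwoNeighbors.eq_of_isClique_of_card_eq_three [DecidableEq W]
    (h2 : AtMostTwoNeighbors Γ) (hc : Γ.support.Pairwise Γ.Reachable) {T T' : Finset W}
    (hT : Γ.IsClique (T : Set W)) (hT' : Γ.IsClique (T' : Set W)) (h3 : #T = 3) (h3' : #T' = 3) : T' = T := by
  have hsupp : ∀ {S : Finset W}, Γ.IsClique (S : Set W) → #S = 3 → ∀ x ∈ S, x ∈ Γ.support := by
    intro S hS hS3 x hx
    obtain ⟨y, hy, hyx⟩ := exists_mem_ne (by omega : 1 < #S) x
    exact ⟨y, hS hx hy hyx.symm⟩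
  obtain ⟨a, ha⟩ := card_pos.1 (by omega : 0 < #T)
  refine eq_of_subset_of_card_le (fun x hx => ?_) (by omega)
  exact (Reachable.of_pairwise hc (hsupp hT h3 a ha) (hsupp hT' h3' x hx)).mem_of_forall_adj_mem
    (S := T) (fun y hy z hyz => h2.mem_of_isClique hT h3.ge hy hyz) ha

theorem AtMostTwoNeighbors.degree_eq_two [Fintype W] [DecidableRel Γ.Adj]
    (h2 : AtMostTwoNeighbors Γ) {x y z : W} (hy : Γ.Adj x y) (hz : Γ.Adj x z) (hyz : y ≠ z) :
    Γ.degree x = 2 := by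
  classical
  rw [← card_neighborFinset_eq_degree, ← card_pair hyz]
  congr 1
  ext t
  simp only [mem_neighborFinset, mem_insert, mem_singleton]
  exact ⟨h2.eq_or_eq hy hz hyz, by rintro (rfl | rfl) <;> assumption⟩

theorem degree_deleteIncidenceSet_add [Fintype W] [DecidableEq W] [DecidableRel Γ.Adj] {v x : W}
    (hx : x ≠ v) :
    (Γ.deleteIncidenceSet v).degree x + (if Γ.Adj x v then 1 else 0) = Γ.degree x := by
  have hN : (Γ.deleteIncidenceSet v).neighborFinset x = (Γ.neighborFinset x).erase v := by
    ext y
    simp [deleteIncidenceSet_adj, hx, and_comm]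
  rw [← card_neighborFinset_eq_degree, ← card_neighborFinset_eq_degree, hN]
  split_ifs with h
  · exact card_erase_add_one ((mem_neighborFinset _ _ _).2 h)
  · rw [erase_eq_of_notMem (by simpa using h), add_zero]

theorem adj_of_odd_degree_deleteIncidenceSet [Fintype W] [DecidableEq W] [DecidableRel Γ.Adj]
    (heven : ∀ x, Even (Γ.degree x)) {v x : W}
    (hx : Odd ((Γ.deleteIncidenceSet v).degree x)) : Γ.Adj v x := by
  by_cases hxv : x = v
  · subst hxv
    have : (Γ.deleteIncidenceSet x).degree x = 0 := by
      rw [degree_eq_zero_iff_notMem_support]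
      rintro ⟨y, hy⟩
      exact (deleteIncidenceSet_adj.1 hy).2.1 rfl
    simp [this] at hx
  · have := degree_deleteIncidenceSet_add (Γ := Γ) hxv
    split_ifs at this with h
    · exact h.symm
    · rw [add_zero] at this
      exact absurd (this ▸ heven x) (Nat.not_even_iff_odd.2 hx)

/-- Handshake lemma in the component of `a` in `Γ - v`: there `a` has odd degree, and `b` is the
only other vertex that can have odd degree. -/
theorem reachable_deleteIncidenceSet_of_even_degree [Fintype W] [DecidableEq W]
    [DecidableRel Γ.Adj] (heven : ∀ x, Even (Γ.degree x)) {v a b : W}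
    (ha : Γ.Adj v a) (hv : ∀ c, Γ.Adj v c → c = a ∨ c = b) :
    (Γ.deleteIncidenceSet v).Reachable a b := by
  set Γ' := Γ.deleteIncidenceSet v
  by_contra hab
  set C := Γ'.connectedComponentMk a
  have hdegC : ∀ y : C.supp, (Γ'.induce C.supp).degree y = Γ'.degree y := fun y =>
    degree_induce_of_neighborSet_subset fun z hz =>
      ((ConnectedComponent.connectedComponentMk_eq_of_adj hz).symm.trans y.2 :)
  have ha' : Odd ((Γ'.induce C.supp).degree ⟨a, ConnectedComponent.connectedComponentMk_mem⟩) := by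
    have h := heven a
    rw [← degree_deleteIncidenceSet_add ha.ne.symm, if_pos ha.symm, Nat.even_add_one,
      Nat.not_even_iff_odd] at h
    rwa [hdegC]
  obtain ⟨w, hwa, hw⟩ := exists_ne_odd_degree_of_exists_odd_degree _ _ ha'
  rw [hdegC] at hw
  rcases hv w (adj_of_odd_degree_deleteIncidenceSet heven hw) with h | h
  · exact hwa (Subtype.ext h)
  · exact hab (h ▸ ConnectedComponent.exact w.2.symm)

end Graphs

section VertexDecomposable

variable {W : Type*} {K : Set (Finset W)} {v : W}

theorem IsComplex.del (hK : IsComplex K) (v : W) : IsComplex (del K v) :=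
  ⟨⟨hK.1, notMem_empty v⟩, fun _ hF _ hGF => ⟨hK.2 _ hF.1 _ hGF, fun h => hF.2 (hGF h)⟩⟩

theorem oneSkeleton_mono [DecidableEq W] {K L : Set (Finset W)} (h : K ⊆ L) :
    oneSkeleton K ≤ oneSkeleton L :=
  fun _ _ hxy => ⟨hxy.1, h hxy.2⟩

theorem IsSheddingVertex.mem_support_del [DecidableEq W] (hK : IsComplex K)
    (hv : IsSheddingVertex K v) {x : W} (hx : x ∈ (oneSkeleton K).support) (hxv : x ≠ v) :
    x ∈ (oneSkeleton (del K v)).support := by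
  obtain ⟨a, hxa, hK_xa⟩ := (mem_support _).1 hx
  by_cases hav : a = v
  · rw [hav] at hK_xa
    have hx_del : {x} ∈ del K v := ⟨hK.2 _ hK_xa _ (by simp), by simpa using hxv.symm⟩
    have hx_link : {x} ∈ link K v := ⟨by simpa using hxv.symm, by rwa [pair_comm]⟩
    obtain ⟨G, hG, hxG, hne⟩ : ∃ G ∈ del K v, {x} ⊆ G ∧ {x} ≠ G := by
      by_contra! h
      exact hv.2 _ hx_link ⟨hx_del, h⟩
    obtain ⟨y, hyG, hyx⟩ := exists_of_ssubset (ssubset_of_subset_of_ne hxG hne)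
    refine (mem_support _).2 ⟨y, fun h => hyx (by simp [h]), (hK.del v).2 _ hG _ ?_⟩
    exact insert_subset (singleton_subset_iff.1 hxG) (singleton_subset_iff.2 hyG)
  · exact (mem_support _).2 ⟨a, hxa, hK_xa, by simp [hxv.symm, Ne.symm hav]⟩

theorem VertexDecomposable.pairwise_reachable [DecidableEq W] (h : VertexDecomposable K)
    (hK : IsComplex K) : (oneSkeleton K).support.Pairwise (oneSkeleton K).Reachable := by
  induction h with
  | simplex K hS =>
    obtain ⟨F, rfl⟩ := hS
    have hmem : ∀ {x}, x ∈ (oneSkeleton {G | G ⊆ F}).support → x ∈ F := fun hx => by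
      obtain ⟨_, _, hxa⟩ := (mem_support _).1 hx
      exact hxa (mem_insert_self _ _)
    exact fun u hu w hw huw => Adj.reachable ⟨huw, insert_subset (hmem hu) (by simpa using hmem hw)⟩
  | shed K v hv _ _ _ ih =>
    have hdel := ih (hK.del v)
    have hle := oneSkeleton_mono (K := del K v) (L := K) fun _ hF => hF.1
    have hstep : ∀ x ∈ (oneSkeleton K).support, ∃ x' ∈ (oneSkeleton (del K v)).support,
        (oneSkeleton K).Reachable x x' := by
      intro x hx
      by_cases hxv : x = v
      · obtain ⟨a, hxa⟩ := (mem_support _).1 hx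
        exact ⟨a, hv.mem_support_del hK ((mem_support _).2 ⟨x, hxa.symm⟩) (hxv ▸ hxa.ne.symm),
          hxa.reachable⟩
      · exact ⟨x, hv.mem_support_del hK hx hxv, .rfl⟩
    intro u hu w hw _
    obtain ⟨u', hu', huu'⟩ := hstep u hu
    obtain ⟨w', hw', hww'⟩ := hstep w hw
    exact huu'.trans (((Reachable.of_pairwise hdel hu' hw').mono hle).trans hww'.symm)

end VertexDecomposable

section CliqueComplexOn

variable {W : Type*} {Γ : SimpleGraph W} {A : Finset W} {v : W}

theorem isComplex_cliqueComplex (Γ : SimpleGraph W) : IsComplex (cliqueComplex Γ) :=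
  ⟨by simp [cliqueComplex], fun _ hF _ hGF => hF.subset (coe_subset.2 hGF)⟩

def cliqueComplexOn (Γ : SimpleGraph W) (A : Finset W) : Set (Finset W) :=
  {F | Γ.IsClique (F : Set W) ∧ F ⊆ A}

theorem cliqueComplexOn_univ [Fintype W] : cliqueComplexOn Γ univ = cliqueComplex Γ := by
  ext F
  simp [cliqueComplexOn, cliqueComplex]

theorem cliqueComplexOn_of_isClique (h : Γ.IsClique (A : Set W)) :
    cliqueComplexOn Γ A = {F | F ⊆ A} := by
  ext F
  exact ⟨And.right, fun hF => ⟨h.subset (coe_subset.2 hF), hF⟩⟩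

theorem del_cliqueComplexOn [DecidableEq W] :
    del (cliqueComplexOn Γ A) v = cliqueComplexOn (Γ.deleteIncidenceSet v) (A.erase v) := by
  ext F
  simp only [del, cliqueComplexOn, Set.mem_ofPred_eq, subset_erase]
  constructor
  · rintro ⟨⟨hF, hFA⟩, hv⟩
    refine ⟨fun x hx y hy hxy => deleteIncidenceSet_adj.2 ⟨hF hx hy hxy, ?_, ?_⟩, hFA, hv⟩ <;>
      rintro rfl <;> contradiction
  · rintro ⟨hF, hFA, hv⟩
    exact ⟨⟨hF.mono (deleteIncidenceSet_le Γ v), hFA⟩, hv⟩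

/-- `v` is a shedding vertex of `cliqueComplexOn Γ A` whose link (an independent set) and
deletion again satisfy the hypotheses of `vertexDecomposable_cliqueComplexOn`. -/
structure IsSheddable (Γ : SimpleGraph W) (A : Finset W) (v : W) : Prop where
  mem : v ∈ A
  exists_ne : ∃ u ∈ A, u ≠ v
  not_adj : ∀ ⦃a b⦄, Γ.Adj v a → Γ.Adj v b → ¬Γ.Adj a b
  exists_adj : ∀ ⦃a⦄, Γ.Adj v a → ∃ x ≠ v, Γ.Adj a x
  reachable : ∀ ⦃a b⦄, Γ.Adj v a → Γ.Adj v b → (Γ.deleteIncidenceSet v).Reachable a b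

theorem IsSheddable.link_eq [DecidableEq W] [DecidableRel Γ.Adj] (h : IsSheddable Γ A v) :
    link (cliqueComplexOn Γ A) v = cliqueComplexOn ⊥ (A.filter (Γ.Adj v)) := by
  ext F
  simp only [link, cliqueComplexOn, Set.mem_ofPred_eq, coe_insert, isClique_insert,
    isClique_bot_iff, insert_subset_iff]
  rw [subset_iff, subset_iff]
  simp only [mem_filter]
  constructor
  · rintro ⟨hv, ⟨hF, hvF⟩, -, hFA⟩
    refine ⟨fun a ha b hb => by_contra fun hab => ?_, fun a ha => ⟨hFA ha, hvF a ha ?_⟩⟩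
    · exact h.not_adj (hvF a ha (by rintro rfl; exact hv ha))
        (hvF b hb (by rintro rfl; exact hv hb)) (hF ha hb hab)
    · rintro rfl; exact hv ha
  · rintro ⟨hF, hFA⟩
    refine ⟨fun hv => (hFA hv).2.ne rfl, ⟨fun a ha b hb hab => absurd (hF ha hb) hab,
      fun a ha _ => (hFA ha).2⟩, h.mem, fun a ha => (hFA ha).1⟩

theorem IsSheddable.isSheddingVertex [DecidableEq W] [DecidableRel Γ.Adj] (h : IsSheddable Γ A v)
    (hA : Γ.support ⊆ A) : IsSheddingVertex (cliqueComplexOn Γ A) v := by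
  have hgrow : ∀ {K : Set (Finset W)} {F G : Finset W}, G ∈ K → F ⊆ G → F ≠ G → ¬IsFacet K F :=
    fun hG hFG hne hF => hne (hF.2 _ hG hFG)
  refine ⟨⟨by simp, by simpa using h.mem⟩, fun F hF => ?_⟩
  rw [h.link_eq] at hF
  obtain ⟨hFsub, hFA⟩ := hF
  rw [del_cliqueComplexOn]
  rcases F.eq_empty_or_nonempty with rfl | ⟨a, ha⟩
  · obtain ⟨u, hu, huv⟩ := h.exists_ne
    exact hgrow (G := {u}) ⟨by rw [coe_singleton]; exact isClique_singleton u,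
      singleton_subset_iff.2 (mem_erase.2 ⟨huv, hu⟩)⟩ (empty_subset _) (singleton_ne_empty u).symm
  · obtain rfl : F = {a} :=
      eq_singleton_iff_unique_mem.2 ⟨ha, fun b hb => isClique_bot_iff.1 hFsub hb ha⟩
    have hva : Γ.Adj v a := (mem_filter.1 (hFA ha)).2
    obtain ⟨x, hxv, hax⟩ := h.exists_adj hva
    have hxa : x ∉ ({a} : Finset W) := by simpa using hax.ne.symm
    refine hgrow (G := {a, x}) ⟨?_, ?_⟩ (by simp) fun h => hxa (by rw [h]; simp)
    · rw [coe_pair, isClique_pair]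
      exact fun _ => deleteIncidenceSet_adj.2 ⟨hax, hva.ne.symm, hxv⟩
    · exact insert_subset (mem_erase.2 ⟨hva.ne.symm, (mem_filter.1 (hFA ha)).1⟩)
        (singleton_subset_iff.2 (mem_erase.2 ⟨hxv, hA ⟨a, hax.symm⟩⟩))

theorem isSheddable_of_notMem_support (hv : v ∈ A) (hv' : v ∉ Γ.support)
    (hne : ∃ u ∈ A, u ≠ v) : IsSheddable Γ A v where
  mem := hv
  exists_ne := hne
  not_adj _ _ ha := absurd ⟨_, ha⟩ hv'
  exists_adj _ ha := absurd ⟨_, ha⟩ hv'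
  reachable _ _ ha := absurd ⟨_, ha⟩ hv'

theorem isSheddable_of_unique_adj (hA : Γ.support ⊆ A) (hv : v ∈ A) {u x : W} (hvu : Γ.Adj v u)
    (huniq : ∀ c, Γ.Adj v c → c = u) (hux : Γ.Adj u x) (hxv : x ≠ v) : IsSheddable Γ A v where
  mem := hv
  exists_ne := ⟨u, hA ⟨x, hux⟩, hvu.ne.symm⟩
  not_adj a b ha hb := by rw [huniq a ha, huniq b hb]; exact Γ.loopless.irrefl u
  exists_adj a ha := huniq a ha ▸ ⟨x, hxv, hux⟩
  reachable a b ha hb := by rw [huniq a ha, huniq b hb]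

theorem isSheddable_of_two_neighbors [Fintype W] [DecidableEq W] [DecidableRel Γ.Adj]
    (h2 : AtMostTwoNeighbors Γ) (hA : Γ.support ⊆ A)
    (htwo : ∀ x ∈ Γ.support, ∃ y z, y ≠ z ∧ Γ.Adj x y ∧ Γ.Adj x z) (hv : v ∈ A) {a b : W}
    (hva : Γ.Adj v a) (hvb : Γ.Adj v b) (hab : a ≠ b) (hnab : ¬Γ.Adj a b) :
    IsSheddable Γ A v := by
  have heven : ∀ x, Even (Γ.degree x) := by
    intro x
    by_cases hx : x ∈ Γ.support
    · obtain ⟨y, z, hyz, hy, hz⟩ := htwo x hx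
      rw [h2.degree_eq_two hy hz hyz]
      exact even_two
    · rw [(degree_eq_zero_iff_notMem_support _ _).2 hx]
      exact Even.zero
  refine ⟨hv, ⟨a, hA ⟨v, hva.symm⟩, hva.ne.symm⟩, fun a' b' ha' hb' => ?_, fun a' ha' => ?_,
    fun a' b' ha' hb' => ?_⟩
  · rcases h2.eq_or_eq hva hvb hab ha' with rfl | rfl <;>
      rcases h2.eq_or_eq hva hvb hab hb' with rfl | rfl
    exacts [Γ.loopless.irrefl _, hnab, fun h => hnab h.symm, Γ.loopless.irrefl _]
  · obtain ⟨y, z, hyz, hy, hz⟩ := htwo a' ⟨v, ha'.symm⟩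
    by_cases hyv : y = v
    · exact ⟨z, fun h => hyz (hyv.trans h.symm), hz⟩
    · exact ⟨y, hyv, hy⟩
  · by_cases ha'b' : a' = b'
    · exact ha'b' ▸ .rfl
    · exact reachable_deleteIncidenceSet_of_even_degree heven ha' fun c hc =>
        h2.eq_or_eq ha' hb' ha'b' hc

theorem isClique_or_exists_isSheddable [Fintype W] [DecidableEq W] [DecidableRel Γ.Adj]
    (h2 : AtMostTwoNeighbors Γ) (hc : Γ.support.Pairwise Γ.Reachable) {A : Finset W}
    (hA : Γ.support ⊆ A) : Γ.IsClique (A : Set W) ∨ ∃ v, IsSheddable Γ A v := by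
  by_cases hiso : ∃ v ∈ A, v ∉ Γ.support
  · obtain ⟨v, hv, hv'⟩ := hiso
    by_cases hne : ∃ u ∈ A, u ≠ v
    · exact .inr ⟨v, isSheddable_of_notMem_support hv hv' hne⟩
    · push Not at hne
      exact .inl (IsClique.of_subsingleton fun x hx y hy => (hne x hx).trans (hne y hy).symm)
  push Not at hiso
  by_cases hleaf : ∃ v ∈ A, ∃ u, Γ.Adj v u ∧ ∀ c, Γ.Adj v c → c = u
  · obtain ⟨v, hv, u, hvu, huniq⟩ := hleaf
    by_cases hx : ∃ x, x ≠ v ∧ Γ.Adj u x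
    · obtain ⟨x, hxv, hux⟩ := hx
      exact .inr ⟨v, isSheddable_of_unique_adj hA hv hvu huniq hux hxv⟩
    · push Not at hx
      refine .inl (isClique_of_forall_adj_mem hc hiso (S := {v, u}) ?_ ?_ (by simp) (hiso v hv))
      · rw [isClique_pair]; exact fun _ => hvu
      · rintro x (rfl | rfl) y hxy
        · exact .inr (huniq y hxy)
        · exact .inl (not_not.1 fun hyv => hx y hyv hxy)
  push Not at hleaf
  have htwo : ∀ x ∈ Γ.support, ∃ y z, y ≠ z ∧ Γ.Adj x y ∧ Γ.Adj x z := by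
    rintro x ⟨y, hy⟩
    obtain ⟨z, hz, hzy⟩ := hleaf x (hA ⟨y, hy⟩) y hy
    exact ⟨y, z, hzy.symm, hy, hz⟩
  rcases A.eq_empty_or_nonempty with rfl | ⟨v, hv⟩
  · exact .inl (by simp)
  obtain ⟨a, b, hab, hva, hvb⟩ := htwo v (hiso v hv)
  by_cases hadj : Γ.Adj a b
  · have hT : Γ.IsClique (({v, a, b} : Finset W) : Set W) := by
      simp [isClique_insert, hva, hvb, hadj]
    refine .inl (isClique_of_forall_adj_mem hc hiso hT (fun x hx y hxy => ?_) (by simp)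
      (hiso v hv))
    refine h2.mem_of_isClique hT ?_ hx hxy
    rw [card_insert_of_notMem (by simp [hva.ne, hvb.ne]), card_pair hab]
  · exact .inr ⟨v, isSheddable_of_two_neighbors h2 hA htwo hv hva hvb hab hadj⟩

theorem vertexDecomposable_cliqueComplexOn [Fintype W] [DecidableEq W] (A : Finset W)
    (hA : Γ.support ⊆ A) (h2 : AtMostTwoNeighbors Γ) (hc : Γ.support.Pairwise Γ.Reachable) :
    VertexDecomposable (cliqueComplexOn Γ A) := by
  classical
  induction A using Finset.strongInduction generalizing Γ with
  | H A ih =>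
  rcases isClique_or_exists_isSheddable h2 hc hA with hA' | ⟨v, hv⟩
  · exact .simplex _ ⟨A, cliqueComplexOn_of_isClique hA'⟩
  refine .shed _ v (hv.isSheddingVertex hA) ?_ ?_
  · rw [hv.link_eq]
    refine ih _ (filter_ssubset.2 ⟨v, hv.mem, Γ.loopless.irrefl v⟩) (by simp)
      (fun _ _ _ _ h => h.elim) (by simp)
  · rw [del_cliqueComplexOn]
    refine ih _ (erase_ssubset hv.mem) (fun x hx => ?_) (h2.mono (deleteIncidenceSet_le Γ v))
      (pairwise_reachable_deleteIncidenceSet hc hv.reachable)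
    obtain ⟨y, hxy⟩ := hx
    exact mem_erase.2 ⟨(deleteIncidenceSet_adj.1 hxy).2.1, hA ⟨y, (deleteIncidenceSet_adj.1 hxy).1⟩⟩

end CliqueComplexOn

section CohenMacaulay

variable {W : Type*} [DecidableEq W] (k : Type*) [Field k] {K : Set (Finset W)}

theorem linkFace_empty (K : Set (Finset W)) : linkFace K ∅ = K := by
  ext F
  simp [linkFace]

theorem mem_linkFace_pureSkeleton_of_subset {i : ℕ} {F G G' : Finset W}
    (hG : G ∈ linkFace (pureSkeleton K i) F) (hG' : G' ⊆ G) :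
    G' ∈ linkFace (pureSkeleton K i) F := by
  obtain ⟨hdisj, T, hT, hTc, hFG⟩ := hG
  exact ⟨hdisj.mono_right hG', T, hT, hTc, (union_subset_union_right hG').trans hFG⟩

theorem homologyVanishes_linkFace_pureSkeleton_zero {i : ℕ} {F G : Finset W}
    (hG : G ∈ linkFace (pureSkeleton K i) F) (hG0 : G.Nonempty) :
    HomologyVanishes k (linkFace (pureSkeleton K i) F) 0 :=
  have ⟨_, hx⟩ := hG0
  homologyVanishes_zero k (mem_linkFace_pureSkeleton_of_subset hG (singleton_subset_iff.2 hx))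

theorem card_add_card_le_of_mem_linkFace_pureSkeleton {i : ℕ} {F G : Finset W}
    (hG : G ∈ linkFace (pureSkeleton K i) F) : #F + #G ≤ i + 1 := by
  obtain ⟨hdisj, T, -, hTc, hFG⟩ := hG
  rw [← card_union_of_disjoint hdisj, ← hTc]
  exact card_le_card hFG

theorem isCMover_pureSkeleton_zero (K : Set (Finset W)) : IsCMover k (pureSkeleton K 0) := by
  rintro F - j ⟨G, hG, hj⟩
  have := card_add_card_le_of_mem_linkFace_pureSkeleton hG
  obtain rfl : j = 0 := by omega
  exact homologyVanishes_linkFace_pureSkeleton_zero k hG (card_pos.1 (by omega))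

theorem isCMover_pureSkeleton_one
    (hc : ∀ x y, {x} ∈ pureSkeleton K 1 → {y} ∈ pureSkeleton K 1 →
      (oneSkeleton (pureSkeleton K 1)).Reachable x y) :
    IsCMover k (pureSkeleton K 1) := by
  rintro F - j ⟨G, hG, hj⟩
  have := card_add_card_le_of_mem_linkFace_pureSkeleton hG
  rcases Nat.eq_zero_or_pos j with rfl | hj0
  · exact homologyVanishes_linkFace_pureSkeleton_zero k hG (card_pos.1 (by omega))
  obtain rfl : F = ∅ := card_eq_zero.1 (by omega)
  obtain rfl : j = 1 := by omega
  rw [linkFace_empty]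
  exact homologyVanishes_one k hc

theorem isCMover_simplex (T : Finset W) : IsCMover k {X | X ⊆ T} := by
  rintro F - j ⟨G, ⟨hdisj, hFG⟩, hj⟩
  obtain ⟨x, hx⟩ := card_pos.1 (by omega : 0 < #G)
  refine homologyVanishes_of_isCone k (v := x) (fun X hX => ?_) j
  obtain ⟨hdisjX, hFX⟩ := hX
  refine ⟨?_, ?_⟩
  · exact disjoint_insert_right.2 ⟨disjoint_right.1 hdisj hx, hdisjX⟩
  · rw [union_insert]
    exact insert_subset (hFG (mem_union_right F hx)) hFX

theorem isCMover_pureSkeleton_of_subsingleton {i : ℕ} (h : {T | T ∈ K ∧ #T = i + 1}.Subsingleton) :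
    IsCMover k (pureSkeleton K i) := by
  intro F hF
  obtain ⟨T, hT, hTc, -⟩ := id hF
  have hL : pureSkeleton K i = {X | X ⊆ T} := by
    ext X
    exact ⟨fun ⟨T', hT', hT'c, hX⟩ => h ⟨hT', hT'c⟩ ⟨hT, hTc⟩ ▸ hX, fun hX => ⟨T, hT, hTc, hX⟩⟩
  rw [hL] at hF ⊢
  exact isCMover_simplex k T F hF

end CohenMacaulay

section CliqueComplex

variable {W : Type*} [DecidableEq W] {Γ : SimpleGraph W}

theorem oneSkeleton_cliqueComplex (Γ : SimpleGraph W) : oneSkeleton (cliqueComplex Γ) = Γ := by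
  ext x y
  simp only [oneSkeleton, cliqueComplex, Set.mem_ofPred_eq, coe_pair, isClique_pair]
  exact ⟨fun h => h.2 h.1, fun h => ⟨h.ne, fun _ => h⟩⟩

theorem oneSkeleton_pureSkeleton_one_cliqueComplex (Γ : SimpleGraph W) :
    oneSkeleton (pureSkeleton (cliqueComplex Γ) 1) = Γ := by
  ext x y
  constructor
  · rintro ⟨hxy, T, hT, -, hsub⟩
    exact hT (hsub (mem_insert_self x {y})) (hsub (by simp)) hxy
  · intro h
    refine ⟨h.ne, {x, y}, ?_, card_pair h.ne, subset_rfl⟩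
    simpa [cliqueComplex, coe_pair, isClique_pair] using fun _ => h

theorem singleton_mem_pureSkeleton_one_cliqueComplex {x : W} :
    {x} ∈ pureSkeleton (cliqueComplex Γ) 1 ↔ x ∈ Γ.support := by
  constructor
  · rintro ⟨T, hT, hTc, hxT⟩
    obtain ⟨a, b, hab, rfl⟩ := card_eq_two.1 hTc
    have hadj : Γ.Adj a b := hT (by simp) (by simp) hab
    rcases mem_insert.1 (singleton_subset_iff.1 hxT) with rfl | hx
    · exact ⟨b, hadj⟩
    · exact ⟨a, (mem_singleton.1 hx) ▸ hadj.symm⟩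
  · rintro ⟨y, hxy⟩
    have := (oneSkeleton_pureSkeleton_one_cliqueComplex Γ).symm ▸ hxy
    obtain ⟨-, T, hT, hTc, hsub⟩ := this
    exact ⟨T, hT, hTc, singleton_subset_iff.2 (hsub (mem_insert_self x {y}))⟩

theorem vertexDecomposable_cliqueComplex_iff [Fintype W] (h2 : AtMostTwoNeighbors Γ) :
    VertexDecomposable (cliqueComplex Γ) ↔ Γ.support.Pairwise Γ.Reachable := by
  refine ⟨fun h => ?_, fun hc => ?_⟩
  · simpa only [oneSkeleton_cliqueComplex] using h.pairwise_reachable (isComplex_cliqueComplex Γ)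
  · rw [← cliqueComplexOn_univ]
    exact vertexDecomposable_cliqueComplexOn univ (by simp) h2 hc

variable (k : Type*) [Field k]

theorem isSeqCMover_cliqueComplex (h2 : AtMostTwoNeighbors Γ)
    (hc : Γ.support.Pairwise Γ.Reachable) : IsSeqCMover k (cliqueComplex Γ)
  | 0 => isCMover_pureSkeleton_zero k _
  | 1 => isCMover_pureSkeleton_one k fun x y hx hy => by
    rw [singleton_mem_pureSkeleton_one_cliqueComplex] at hx hy
    rw [oneSkeleton_pureSkeleton_one_cliqueComplex]
    exact Reachable.of_pairwise hc hx hy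
  | i + 2 => isCMover_pureSkeleton_of_subsingleton k fun T ⟨hT, hTc⟩ T' ⟨hT', hT'c⟩ => by
    have := h2.card_le_three hT
    exact h2.eq_of_isClique_of_card_eq_three hc hT' hT (by omega) (by omega)

theorem pairwise_reachable_of_isSeqCMover (h : IsSeqCMover k (cliqueComplex Γ)) :
    Γ.support.Pairwise Γ.Reachable := by
  intro u hu w hw _
  obtain ⟨a, hua⟩ := (mem_support _).1 hu
  rw [← singleton_mem_pureSkeleton_one_cliqueComplex] at hu hw
  have hpair : {u, a} ∈ pureSkeleton (cliqueComplex Γ) 1 := by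
    rw [← oneSkeleton_pureSkeleton_one_cliqueComplex Γ] at hua
    exact hua.2
  have hempty : ∅ ∈ pureSkeleton (cliqueComplex Γ) 1 :=
    have ⟨T, hT, hTc, _⟩ := hpair
    ⟨T, hT, hTc, empty_subset T⟩
  have hH := h 1 ∅ hempty 1 ⟨{u, a}, by rwa [linkFace_empty], by rw [card_pair hua.ne]; omega⟩
  rw [linkFace_empty] at hH
  simpa only [oneSkeleton_pureSkeleton_one_cliqueComplex] using
    reachable_of_homologyVanishes_one k hH hu hw

end CliqueComplex

theorem stmt18_general {V : Type} [DecidableEq V] [Fintype V] (H : SimpleGraph V)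
    (hcomp : ∀ c : (SimpleGraph.lineGraph H).ConnectedComponent, ∃ n : ℕ,
       Nonempty ((SimpleGraph.induce c.supp (SimpleGraph.lineGraph H)) ≃g pathGraph n) ∨
       Nonempty ((SimpleGraph.induce c.supp (SimpleGraph.lineGraph H)) ≃g cycleGraph n)) :
    VertexDecomposable (cliqueComplex (SimpleGraph.lineGraph H)) ↔
      ∃ (k : Type) (fk : Field k),
        @IsSeqCMover _ _ k fk (cliqueComplex (SimpleGraph.lineGraph H)) := by
  classical
  have h2 : AtMostTwoNeighbors (lineGraph H) := atMostTwoNeighbors_of_forall_connectedComponent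
    fun c => by
      obtain ⟨n, hφ | hφ⟩ := hcomp c
      all_goals obtain ⟨φ⟩ := hφ
      exacts [(atMostTwoNeighbors_pathGraph n).of_embedding φ.toEmbedding,
        (atMostTwoNeighbors_cycleGraph n).of_embedding φ.toEmbedding]
  rw [vertexDecomposable_cliqueComplex_iff h2]
  exact ⟨fun hc => ⟨ℚ, inferInstance, isSeqCMover_cliqueComplex ℚ h2 hc⟩,
    fun ⟨k, _, hk⟩ => pairwise_reachable_of_isSeqCMover k hk⟩

theorem stmt18 {V : Type} [DecidableEq V] [Fintype V] (H : SimpleGraph V)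
    [DecidableRel H.Adj] (hedge : H.edgeSet.Nonempty) (hdeg : ∀ v : V, H.degree v ≤ 3)
    (hcomp : ∀ c : (SimpleGraph.lineGraph H).ConnectedComponent, ∃ n : ℕ,
       Nonempty ((SimpleGraph.induce c.supp (SimpleGraph.lineGraph H)) ≃g pathGraph n) ∨
       Nonempty ((SimpleGraph.induce c.supp (SimpleGraph.lineGraph H)) ≃g cycleGraph n)) :
    VertexDecomposable (cliqueComplex (SimpleGraph.lineGraph H)) ↔
      ∃ (k : Type) (fk : Field k),
        @IsSeqCMover _ _ k fk (cliqueComplex (SimpleGraph.lineGraph H)) :=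
  stmt18_general H hcomp
end
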